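/- If a finite geometry has at least two lines and the number of points equals the number of lines (v = b), then any two distinct lines of the geometry intersect (have a common point). -/

import Mathlib

/-- A finite geometry (finite linear space): any two distinct points lie on exactly one
common line, and every line contains at least two points. -/
def IsGeometry {P : Type*} (lines : Finset (Finset P)) : Prop :=
  (∀ p q : P, p ≠ q → ∃! ℓ, ℓ ∈ lines ∧ p ∈ ℓ ∧ q ∈ ℓ) ∧
  (∀ ℓ ∈ lines, 2 ≤ ℓ.card)

/-!
With at least two lines, every line misses a point and every point misses a line, so a finite
linear space is a nondegenerate configuration with a line through any two points, and Mathlib's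
`Configuration.HasLines.hasPoints` applies. The counting behind it: write `r p` for the number of
lines through `p` and `k ℓ` for the number of points on `ℓ`. If `p ∉ ℓ` then `k ℓ ≤ r p`, with strict
inequality when some line through `p` misses `ℓ`. Hence for `v = b`, weighting each non-incident
pair by `1 / (v - k ℓ)` or by `1 / (b - r p)` gives `b = ∑ 1 / (v - k ℓ) ≤ ∑ 1 / (b - r p) = v`,
so equality holds termwise and no line through a point off `ℓ` misses `ℓ`.
-/

open Finset

instance {P : Type*} (lines : Finset (Finset P)) : Membership P lines :=
  ⟨fun ℓ p => p ∈ (ℓ : Finset P)⟩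

namespace IsGeometry

variable {P : Type*} {lines : Finset (Finset P)}

theorem eq_of_mem_of_mem (h : IsGeometry lines) {p q : P} (hpq : p ≠ q) {ℓ m : Finset P}
    (hℓ : ℓ ∈ lines) (hpℓ : p ∈ ℓ) (hqℓ : q ∈ ℓ) (hm : m ∈ lines) (hpm : p ∈ m) (hqm : q ∈ m) :
    ℓ = m :=
  (h.1 p q hpq).unique ⟨hℓ, hpℓ, hqℓ⟩ ⟨hm, hpm, hqm⟩

theorem exists_notMem (h : IsGeometry lines) (hlines : 2 ≤ #lines) {ℓ : Finset P}
    (hℓ : ℓ ∈ lines) : ∃ p, p ∉ ℓ := by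
  by_contra! hall
  obtain ⟨m, hm, hmℓ⟩ := lines.exists_mem_ne hlines ℓ
  obtain ⟨x, hx, y, hy, hxy⟩ := one_lt_card.1 (h.2 m hm)
  exact hmℓ (h.eq_of_mem_of_mem hxy hm hx hy hℓ (hall x) (hall y))

theorem exists_mem_notMem (h : IsGeometry lines) (hlines : 2 ≤ #lines) (p : P) :
    ∃ ℓ ∈ lines, p ∉ ℓ := by
  by_contra! hall
  obtain ⟨m₁, hm₁⟩ := card_pos.1 (by omega : 0 < #lines)
  obtain ⟨m₂, hm₂, hm₂₁⟩ := lines.exists_mem_ne hlines m₁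
  obtain ⟨q₁, hq₁, hq₁p⟩ := m₁.exists_mem_ne (h.2 m₁ hm₁) p
  obtain ⟨q₂, hq₂, hq₂p⟩ := m₂.exists_mem_ne (h.2 m₂ hm₂) p
  have hq₁₂ : q₁ ≠ q₂ := by
    rintro rfl
    exact hm₂₁ (h.eq_of_mem_of_mem hq₁p.symm hm₂ (hall m₂ hm₂) hq₂ hm₁ (hall m₁ hm₁) hq₁)
  -- the line through `q₁` and `q₂` passes through `p`, so it is both `m₁` and `m₂`
  obtain ⟨n, ⟨hn, hq₁n, hq₂n⟩, -⟩ := h.1 q₁ q₂ hq₁₂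
  have h₁ := h.eq_of_mem_of_mem hq₁p.symm hn (hall n hn) hq₁n hm₁ (hall m₁ hm₁) hq₁
  have h₂ := h.eq_of_mem_of_mem hq₂p.symm hn (hall n hn) hq₂n hm₂ (hall m₂ hm₂) hq₂
  exact hm₂₁ (h₂.symm.trans h₁)

noncomputable abbrev hasLines (h : IsGeometry lines) (hlines : 2 ≤ #lines) :
    Configuration.HasLines P lines where
  exists_point ℓ := h.exists_notMem hlines ℓ.2
  exists_line p := by
    obtain ⟨ℓ, hℓ, hpℓ⟩ := h.exists_mem_notMem hlines p
    exact ⟨⟨ℓ, hℓ⟩, hpℓ⟩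
  eq_or_eq {p q ℓ m} hpℓ hqℓ hpm hqm := or_iff_not_imp_left.2 fun hpq =>
    Subtype.ext (h.eq_of_mem_of_mem hpq ℓ.2 hpℓ hqℓ m.2 hpm hqm)
  mkLine hpq := ⟨_, (h.1 _ _ hpq).exists.choose_spec.1⟩
  mkLine_ax hpq := (h.1 _ _ hpq).exists.choose_spec.2

end IsGeometry

/-- In a finite geometry with at least two lines and as many points as lines,
any two distinct lines intersect. -/
theorem lines_intersect_of_card_eq {P : Type*} [Fintype P] (lines : Finset (Finset P))
    (hgeom : IsGeometry lines) (hlines : 2 ≤ lines.card)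
    (hvb : Fintype.card P = lines.card) :
    ∀ ℓ₁ ∈ lines, ∀ ℓ₂ ∈ lines, ℓ₁ ≠ ℓ₂ → ∃ p, p ∈ ℓ₁ ∧ p ∈ ℓ₂ := by
  let _ := hgeom.hasLines hlines
  let _ := Configuration.HasLines.hasPoints (P := P) (L := lines) (by rw [hvb, Fintype.card_coe])
  intro ℓ₁ h₁ ℓ₂ h₂ hne
  exact (Configuration.HasPoints.existsUnique_point P lines ⟨ℓ₁, h₁⟩ ⟨ℓ₂, h₂⟩
    (by simpa using hne)).exists
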